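/- arXiv:2512.14647 — 5 statements merged into one kernel-verified Lean document; each statement's English description precedes it below -/
import Mathlib

section
/- Let M be a simplicial belief model in which the belief complexes of two agents a and b coincide, i.e. S_a = S_b. Then at every facet X of S, M,X ⊨ B_a(B_b φ → φ) for every formula φ. -/
/-- Formulas of multi-agent epistemic-doxastic logic (atoms, ⊥, →, K_a, B_a). -/
inductive Formula (Ag Atom : Type) : Type
  | atom : Atom → Formula Ag Atom
  | bot : Formula Ag Atom
  | imp : Formula Ag Atom → Formula Ag Atom → Formula Ag Atom
  | K : Ag → Formula Ag Atom → Formula Ag Atom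
  | B : Ag → Formula Ag Atom → Formula Ag Atom

/-- A simplicial belief model: a simplicial model (nodes, coloring, a
downward-closed complex `S`, valuation `L`) together with, for each agent `a`,
a nonempty subcomplex `Sa a ⊆ S`. -/
structure SimpBeliefModel (Ag Atom : Type) where
  Node : Type
  V : Node → Ag
  S : Set (Set Node)
  downClosed : ∀ ⦃X Y : Set Node⦄, X ⊆ Y → Y ∈ S → X ∈ S
  Sa : Ag → Set (Set Node)
  SaSub : ∀ a, Sa a ⊆ S
  SaNonempty : ∀ a, (Sa a).Nonempty
  SaDownClosed : ∀ a, ∀ ⦃X Y : Set Node⦄, X ⊆ Y → Y ∈ Sa a → X ∈ Sa a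
  L : Atom → Set (Set Node)

namespace SimpBeliefModel

variable {Ag Atom : Type} (M : SimpBeliefModel Ag Atom)

/-- `X` is a facet (maximal face) of the complex `C`. -/
def IsFacetOf (C : Set (Set M.Node)) (X : Set M.Node) : Prop :=
  X ∈ C ∧ ∀ Y ∈ C, X ⊆ Y → Y = X

/-- Uniquely colored facets for a complex `C`: every facet of `C` has exactly
one node of each color. -/
def UCFFor (C : Set (Set M.Node)) : Prop :=
  ∀ X, M.IsFacetOf C X → ∀ a : Ag, ∃! n, n ∈ X ∧ M.V n = a

/-- `π_a(X) = V⁻¹(a) ∩ X`, the set of `a`-colored nodes of `X`. -/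
def pi (a : Ag) (X : Set M.Node) : Set M.Node := {n ∈ X | M.V n = a}

/-- Satisfaction at a facet: `K_a` quantifies over facets of `S`, while
`B_a` quantifies over facets of the belief subcomplex `Sa a`. -/
def Sat : Set M.Node → Formula Ag Atom → Prop
  | X, .atom p => X ∈ M.L p
  | _, .bot => False
  | X, .imp φ ψ => Sat X φ → Sat X ψ
  | X, .K a φ => ∀ Y, M.IsFacetOf M.S Y → M.pi a Y = M.pi a X → Sat Y φ
  | X, .B a φ => ∀ Y, M.IsFacetOf (M.Sa a) Y → M.pi a Y = M.pi a X → Sat Y φ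

end SimpBeliefModel

/-- if the belief complexes of agents `a` and `b` coincide, then
at every facet `X` of `S`, `B_a (B_b φ → φ)` holds. -/
theorem believes_other_factive {Ag Atom : Type} (M : SimpBeliefModel Ag Atom)
    (hUCF : M.UCFFor M.S) (hUCFa : ∀ a, M.UCFFor (M.Sa a))
    (a b : Ag) (hab : M.Sa a = M.Sa b)
    (X : Set M.Node) (hX : M.IsFacetOf M.S X) (φ : Formula Ag Atom) :
    M.Sat X (.B a ((Formula.B b φ).imp φ)) := by
  intro Y hY _ hB
  exact hB Y (hab ▸ hY) rfl
end

section
/- Given a relational model N = (W,(R_a)_{a∈Ag},v) where each R_a is an equivalence relation, the induced simplicial frame (N_N, V_N, S_N) satisfies the uniquely colored facets condition: every facet of S_N contains exactly one a-colored node for each agent a. -/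
variable {W Ag : Type}

/-- The `R_a`-equivalence class `[w]_a` of a world `w`. -/
def eqCls (R : Ag → W → W → Prop) (a : Ag) (w : W) : Set W := {w' | R a w w'}

/-- A node of the induced simplicial frame: a pair `([w]_a, a)`. -/
def IsNode (R : Ag → W → W → Prop) (n : Set W × Ag) : Prop :=
  ∃ w, n.1 = eqCls R n.2 w

/-- The induced simplicial complex `S_N`: faces are sets of nodes whose
associated equivalence classes have nonempty common intersection. -/
def SN (R : Ag → W → W → Prop) : Set (Set (Set W × Ag)) :=
  {F | (∀ n ∈ F, IsNode R n) ∧ (⋂ n ∈ F, n.1).Nonempty}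

/-- `X` is a facet (inclusion-maximal face) of the complex `C`. -/
def IsFacetOf (C : Set (Set (Set W × Ag))) (X : Set (Set W × Ag)) : Prop :=
  X ∈ C ∧ ∀ Y ∈ C, X ⊆ Y → Y = X

/-- `f(w) = {([w]_a, a) : a ∈ Ag}`. -/
def fMap (R : Ag → W → W → Prop) (w : W) : Set (Set W × Ag) :=
  Set.range fun a => (eqCls R a w, a)

lemma eqCls_eq_of_mem (R : Ag → W → W → Prop) (hR : ∀ a, Equivalence (R a))
    {a : Ag} {v w : W} (h : w ∈ eqCls R a v) : eqCls R a v = eqCls R a w := by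
  ext x
  constructor
  · intro hx; exact (hR a).trans ((hR a).symm h) hx
  · intro hx; exact (hR a).trans h hx

/-- the simplicial frame induced by a relational model whose
relations are equivalence relations satisfies UCF: every facet of `S_N`
contains exactly one `a`-colored node for each agent `a`. -/
theorem induced_frame_UCF [Finite Ag] (R : Ag → W → W → Prop)
    (hR : ∀ a, Equivalence (R a)) :
    ∀ F, IsFacetOf (SN R) F → ∀ a : Ag, ∃! n, n ∈ F ∧ n.2 = a := by
  intro F hF a
  obtain ⟨⟨hnodes, ⟨w, hw⟩⟩, hmax⟩ := hF
  have hwmem : ∀ n ∈ F, w ∈ n.1 := by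
    intro n hn
    exact Set.mem_iInter₂.mp hw n hn
  -- the candidate node
  refine ⟨(eqCls R a w, a), ?_, ?_⟩
  · constructor
    · -- F ∪ {candidate} is a face containing F, so equals F
      have hface : insert (eqCls R a w, a) F ∈ SN R := by
        constructor
        · intro n hn
          rcases hn with h | h
          · subst h; exact ⟨w, rfl⟩
          · exact hnodes n h
        · refine ⟨w, ?_⟩
          rw [Set.mem_iInter₂]
          intro n hn
          rcases hn with h | h
          · subst h; exact (hR a).refl w
          · exact hwmem n h
      have := hmax _ hface (Set.subset_insert _ _)
      rw [← this]
      exact Set.mem_insert _ _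
    · rfl
  · rintro ⟨s, b⟩ ⟨hmem, hb⟩
    simp only at hb
    subst hb
    obtain ⟨v, hv⟩ := hnodes _ hmem
    simp only at hv
    subst hv
    have : w ∈ eqCls R b v := hwmem _ hmem
    rw [eqCls_eq_of_mem R hR this]
end

section
/- Let N be a relational model with equivalence relations R_a, and define f : W → F(S_N) by f(w) = {([w]_a, a) : a ∈ Ag}. Then f is well-defined (f(w) is a facet of S_N) and surjective onto the set of facets of S_N. -/
variable {W Ag : Type}

/-- `f(w) = {([w]_a, a) : a ∈ Ag}` is a facet of `S_N` for each
world `w`, and every facet of `S_N` is of this form (surjectivity). -/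
theorem fMap_facet_surjective [Finite Ag] (R : Ag → W → W → Prop)
    (hR : ∀ a, Equivalence (R a)) :
    (∀ w : W, IsFacetOf (SN R) (fMap R w)) ∧
    (∀ F, IsFacetOf (SN R) F → ∃ w : W, fMap R w = F) := by
  have hcls : ∀ a u v, v ∈ eqCls R a u → eqCls R a u = eqCls R a v := by
    intro a u v hv
    ext x
    exact ⟨fun hx => (hR a).trans ((hR a).symm hv) hx, fun hx => (hR a).trans hv hx⟩
  have hmem : ∀ w, fMap R w ∈ SN R := by
    intro w
    refine ⟨?_, ⟨w, ?_⟩⟩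
    · rintro n ⟨a, rfl⟩; exact ⟨w, rfl⟩
    · simp only [Set.mem_iInter]
      rintro n ⟨a, rfl⟩
      exact (hR a).refl w
  have key : ∀ w Y, Y ∈ SN R → fMap R w ⊆ Y → Y ⊆ fMap R w := by
    intro w Y ⟨hnode, v, hv⟩ hsub
    simp only [Set.mem_iInter] at hv
    rintro ⟨C, a⟩ hCa
    obtain ⟨u, hu'⟩ := hnode _ hCa
    have hu : C = eqCls R a u := hu'
    have hvC : v ∈ C := hv _ hCa
    have hvw : v ∈ eqCls R a w := hv _ (hsub ⟨a, rfl⟩)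
    have : C = eqCls R a w := by
      rw [hu] at hvC ⊢
      rw [hcls a u v hvC, hcls a w v hvw]
    exact ⟨a, by simp [this]⟩
  constructor
  · intro w
    exact ⟨hmem w, fun Y hY hsub => Set.Subset.antisymm (key w Y hY hsub) hsub⟩
  · rintro F ⟨⟨hnode, v, hv⟩, hmax⟩
    refine ⟨v, hmax _ (hmem v) ?_⟩
    simp only [Set.mem_iInter] at hv
    rintro ⟨C, a⟩ hCa
    obtain ⟨u, hu'⟩ := hnode _ hCa
    have hu : C = eqCls R a u := hu'
    have hvC : v ∈ C := hv _ hCa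
    have : C = eqCls R a v := by rw [hu] at hvC ⊢; exact hcls a u v hvC
    exact ⟨a, by simp [this]⟩
end

section
/- Let N = (W,(R_a),(Q_a),v) be a relational model for introspective knowledge and belief with |Ag| ≥ 2, |W| of size continuum, g : W → ℝ a bijection, and b ∈ Ag a fixed agent. Define Ñ on W² by: for a ≠ b, (w,u) R̃_a (w',u') iff u = u' and wR_a w'; and (w,u) R̃_b (w',u') iff g(u) − g(w) = g(u') − g(w') and wR_b w'; with Q̃_a defined analogously from Q_a. Then each R̃_a is an equivalence relation, each Q̃_a ⊆ R̃_a is serial and constant on R̃_a-equivalence classes, and the projection ρ(w,u) = w is a surjective bounded morphism with respect to all relations R̃_a, Q̃_a (and also preserves the valuation ṽ(P) = {(w,u) : w ∈ v(P)}). -/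
/- The "skewed" lift of a family of relations to `W × W`: for `a ≠ b` the
relation acts on the first coordinate and fixes the second; for the
distinguished agent `b` it instead requires equality of the `g`-differences
`g(u) − g(w)`. -/
open Classical in
/-- The skewed lift of a family of relations to `W × W`. -/
noncomputable def skew {W Ag : Type} (R : Ag → W → W → Prop) (g : W → ℝ) (b : Ag)
    (a : Ag) (p q : W × W) : Prop :=
  if a = b then g p.2 - g p.1 = g q.2 - g q.1 ∧ R b p.1 q.1
  else p.2 = q.2 ∧ R a p.1 q.1

lemma skew_eq {W Ag : Type} (R : Ag → W → W → Prop) (g : W → ℝ) (b : Ag)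
    (p q : W × W) :
    skew R g b b p q ↔ g p.2 - g p.1 = g q.2 - g q.1 ∧ R b p.1 q.1 := by
  simp [skew]

lemma skew_ne {W Ag : Type} (R : Ag → W → W → Prop) (g : W → ℝ) (b a : Ag)
    (h : a ≠ b) (p q : W × W) :
    skew R g b a p q ↔ p.2 = q.2 ∧ R a p.1 q.1 := by
  simp [skew, h]

/-- given a relational model for introspective knowledge and
belief on `W` (of continuum size, witnessed by the bijection `g : W ≃ ℝ`),
at least two agents, and a distinguished agent `b`, the skewed product model
`Ñ` on `W²` is again a relational model for introspective knowledge and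
belief, and the first projection is a surjective bounded morphism with
respect to all the relations, preserving the valuation
`ṽ(P) = {(w,u) : w ∈ v(P)}`. -/
theorem skew_model_bounded_morphism {W Ag Atom : Type}
    (R Q : Ag → W → W → Prop)
    (hR : ∀ a, Equivalence (R a))
    (hQR : ∀ a w u, Q a w u → R a w u)
    (hser : ∀ a w, ∃ u, Q a w u)
    (hconst : ∀ a w w', R a w w' → ∀ u, Q a w u ↔ Q a w' u)
    (b : Ag) (a₀ : Ag) (ha₀ : a₀ ≠ b)
    (g : W ≃ ℝ) (v : Atom → Set W) :
    (∀ a, Equivalence (skew R g b a)) ∧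
    (∀ a p q, skew Q g b a p q → skew R g b a p q) ∧
    (∀ a (p : W × W), ∃ q, skew Q g b a p q) ∧
    (∀ a p p', skew R g b a p p' → ∀ q, skew Q g b a p q ↔ skew Q g b a p' q) ∧
    Function.Surjective (Prod.fst : W × W → W) ∧
    (∀ a (p q : W × W), skew R g b a p q → R a p.1 q.1) ∧
    (∀ a (p : W × W) (z : W), R a p.1 z → ∃ q, skew R g b a p q ∧ q.1 = z) ∧
    (∀ a (p q : W × W), skew Q g b a p q → Q a p.1 q.1) ∧
    (∀ a (p : W × W) (z : W), Q a p.1 z → ∃ q, skew Q g b a p q ∧ q.1 = z) ∧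
    (∀ (P : Atom) (p : W × W), p ∈ {p : W × W | p.1 ∈ v P} ↔ p.1 ∈ v P) := by
  have hback : ∀ (S : Ag → W → W → Prop) a (p : W × W) (z : W), S a p.1 z →
      ∃ q, skew S g b a p q ∧ q.1 = z := by
    intro S a p z hz
    by_cases hb : a = b
    · subst hb
      refine ⟨(z, g.symm (g p.2 - g p.1 + g z)), ?_, rfl⟩
      rw [skew_eq]
      refine ⟨by simp, hz⟩
    · exact ⟨(z, p.2), (skew_ne S g b a hb _ _).mpr ⟨rfl, hz⟩, rfl⟩
  have hforth : ∀ (S : Ag → W → W → Prop) a (p q : W × W), skew S g b a p q → S a p.1 q.1 := by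
    intro S a p q h
    by_cases hb : a = b
    · subst hb; exact ((skew_eq S g a _ _).mp h).2
    · exact ((skew_ne S g b a hb _ _).mp h).2
  refine ⟨?_, ?_, ?_, ?_, fun w => ⟨(w, w), rfl⟩, hforth R, hback R, hforth Q, hback Q,
    fun P p => Iff.rfl⟩
  · intro a
    by_cases hb : a = b
    · subst hb
      refine ⟨fun p => (skew_eq R g a _ _).mpr ⟨rfl, (hR a).refl _⟩, fun h => ?_, fun h1 h2 => ?_⟩
      · rw [skew_eq] at *
        exact ⟨h.1.symm, (hR a).symm h.2⟩
      · rw [skew_eq] at *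
        exact ⟨h1.1.trans h2.1, (hR a).trans h1.2 h2.2⟩
    · refine ⟨fun p => (skew_ne R g b a hb _ _).mpr ⟨rfl, (hR a).refl _⟩,
        fun h => ?_, fun h1 h2 => ?_⟩
      · rw [skew_ne R g b a hb] at *
        exact ⟨h.1.symm, (hR a).symm h.2⟩
      · rw [skew_ne R g b a hb] at *
        exact ⟨h1.1.trans h2.1, (hR a).trans h1.2 h2.2⟩
  · intro a p q h
    by_cases hb : a = b
    · subst hb
      rw [skew_eq] at *
      exact ⟨h.1, hQR _ _ _ h.2⟩
    · rw [skew_ne _ g b a hb] at *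
      exact ⟨h.1, hQR _ _ _ h.2⟩
  · intro a p
    obtain ⟨z, hz⟩ := hser a p.1
    obtain ⟨q, hq, -⟩ := hback Q a p z hz
    exact ⟨q, hq⟩
  · intro a p p' h q
    by_cases hb : a = b
    · subst hb
      rw [skew_eq] at h
      rw [skew_eq, skew_eq]
      rw [h.1, hconst _ _ _ h.2]
    · rw [skew_ne _ g b a hb] at h
      rw [skew_ne _ g b a hb, skew_ne _ g b a hb]
      rw [h.1, hconst _ _ _ h.2]
end

section
/- With Ñ defined as the skewed product model on W² (as in the properness construction), Ñ is proper with respect to the relations (R̃_a)_{a∈Ag}: for every (w,u) ∈ W², the intersection over all agents a of the R̃_a-equivalence class of (w,u) is the singleton {(w,u)}. -/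
/-- the skewed product model on `W²` is proper: for every pair
`(w,u)`, the intersection over all agents of its `R̃_a`-equivalence classes is
the singleton `{(w,u)}`. -/
theorem skew_model_proper {W Ag : Type}
    (R : Ag → W → W → Prop)
    (hR : ∀ a, Equivalence (R a))
    (b : Ag) (a₀ : Ag) (ha₀ : a₀ ≠ b)
    (g : W ≃ ℝ) :
    ∀ p : W × W, (⋂ a : Ag, {q : W × W | skew R g b a p q}) = {p} := by
  intro p
  ext q
  simp only [Set.mem_iInter, Set.mem_setOf_eq, Set.mem_singleton_iff]
  constructor
  · intro h
    have h0 := h a₀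
    have hb := h b
    simp only [skew, if_neg ha₀, if_pos rfl] at h0 hb
    have h2 : p.2 = q.2 := h0.1
    have h1 : g p.1 = g q.1 := by
      have := hb.1
      rw [h2] at this
      linarith
    have : p.1 = q.1 := g.injective h1
    exact (Prod.ext this h2).symm
  · rintro rfl
    intro a
    simp only [skew]
    split
    · exact ⟨trivial, (hR b).refl _⟩
    · exact ⟨trivial, (hR a).refl _⟩
end
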